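/- arXiv:2408.17312 — 5 statements merged into one kernel-verified Lean document; each statement's English description precedes it below -/
import Mathlib

section
/- Let A be an invertible n×n real matrix, B₁ and B₂ be m×n real matrices, C an m×m real matrix, set S = C + B₂ A⁻¹ B₁ᵀ, and assume S is invertible. Define 𝒜 = [[A, B₁ᵀ],[B₂, −C]] and 𝒫 = [[A, 0],[B₂, −S]]. Then the preconditioned matrix T = 𝒫⁻¹𝒜 satisfies (T − I)² = 0; in particular the polynomial (X − 1)² annihilates T, so the minimal polynomial of T has degree at most 2. -/
open Matrix

/-- The preconditioned matrix `T = 𝒫⁻¹ 𝒜` satisfies `(T - I)² = 0`, so the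
polynomial `(X - 1)²` annihilates `T` and the minimal polynomial of `T`
has degree at most `2`. -/
theorem preconditioned_saddle_point_sq_annihilated (n m : ℕ)
    (A : Matrix (Fin n) (Fin n) ℝ) (hA : IsUnit A)
    (B₁ B₂ : Matrix (Fin m) (Fin n) ℝ) (C : Matrix (Fin m) (Fin m) ℝ)
    (S : Matrix (Fin m) (Fin m) ℝ) (hS : S = C + B₂ * A⁻¹ * B₁ᵀ)
    (hSunit : IsUnit S)
    (T : Matrix (Fin n ⊕ Fin m) (Fin n ⊕ Fin m) ℝ)
    (hT : T = (fromBlocks A 0 B₂ (-S))⁻¹ * fromBlocks A B₁ᵀ B₂ (-C)) :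
    (T - 1) ^ 2 = 0 := by
  have hAd : IsUnit A.det := (Matrix.isUnit_iff_isUnit_det A).mp hA
  have hSd : IsUnit S.det := (Matrix.isUnit_iff_isUnit_det S).mp hSunit
  have hAi : A * A⁻¹ = 1 := Matrix.mul_nonsing_inv A hAd
  have hSi : S * S⁻¹ = 1 := Matrix.mul_nonsing_inv S hSd
  have hSi' : S⁻¹ * S = 1 := Matrix.nonsing_inv_mul S hSd
  set P : Matrix (Fin n ⊕ Fin m) (Fin n ⊕ Fin m) ℝ := fromBlocks A 0 B₂ (-S) with hP
  set Q : Matrix (Fin n ⊕ Fin m) (Fin n ⊕ Fin m) ℝ :=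
    fromBlocks A⁻¹ 0 (S⁻¹ * B₂ * A⁻¹) (-S⁻¹) with hQ
  have hPQ : P * Q = 1 := by
    rw [hP, hQ, Matrix.fromBlocks_multiply]
    have h1 : B₂ * A⁻¹ + -S * (S⁻¹ * B₂ * A⁻¹) = 0 := by
      rw [Matrix.neg_mul, ← Matrix.mul_assoc, ← Matrix.mul_assoc, hSi,
        Matrix.one_mul]
      abel
    have h2 : -S * -S⁻¹ = 1 := by rw [neg_mul_neg, hSi]
    rw [hAi, h1, h2]
    simp [Matrix.fromBlocks_one]
  have hPinv : P⁻¹ = Q := Matrix.inv_eq_right_inv hPQ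
  set D : Matrix (Fin n ⊕ Fin m) (Fin n ⊕ Fin m) ℝ :=
    fromBlocks 0 B₁ᵀ 0 (B₂ * A⁻¹ * B₁ᵀ) with hD
  have hAP : fromBlocks A B₁ᵀ B₂ (-C) = P + D := by
    rw [hP, hD, Matrix.fromBlocks_add, hS]
    abel_nf
  have hQP : Q * P = 1 := mul_eq_one_comm.mp hPQ
  have hT1 : T - 1 = Q * D := by
    rw [hT, hPinv, hAP, Matrix.mul_add, hQP]
    abel
  have hQD : Q * D = fromBlocks 0 (A⁻¹ * B₁ᵀ) 0 0 := by
    rw [hQ, hD, Matrix.fromBlocks_multiply]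
    have h1 : S⁻¹ * B₂ * A⁻¹ * B₁ᵀ + -S⁻¹ * (B₂ * A⁻¹ * B₁ᵀ) = 0 := by
      rw [Matrix.neg_mul]
      rw [show S⁻¹ * B₂ * A⁻¹ * B₁ᵀ = S⁻¹ * (B₂ * A⁻¹ * B₁ᵀ) by
        rw [Matrix.mul_assoc, Matrix.mul_assoc, Matrix.mul_assoc]]
      abel
    rw [h1]
    simp
  have hsq : (Q * D) * (Q * D) = 0 := by
    rw [hQD, Matrix.fromBlocks_multiply]
    simp
  rw [hT1, sq, hsq]
end

section
/- Let A be an invertible n×n real matrix, B₁ and B₂ be m×n real matrices, C an m×m real matrix, set S = C + B₂ A⁻¹ B₁ᵀ, and assume S is invertible. Define 𝒜 = [[A, B₁ᵀ],[B₂, −C]] and 𝒫 = [[A, 0],[B₂, −S]]. Then the spectrum of the preconditioned matrix 𝒫⁻¹𝒜 (over ℂ, embedding the real matrix into the complex matrices) equals {1}. -/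
open Matrix

lemma spec_aux (n m : ℕ) (hnm : 0 < n + m) (X : Matrix (Fin n) (Fin m) ℂ) :
    spectrum ℂ (fromBlocks (1 : Matrix (Fin n) (Fin n) ℂ) X 0
      (1 : Matrix (Fin m) (Fin m) ℂ)) = {1} := by
  ext μ
  simp only [spectrum.mem_iff, Set.mem_singleton_iff]
  have h1 : (algebraMap ℂ (Matrix (Fin n ⊕ Fin m) (Fin n ⊕ Fin m) ℂ)) μ
      - fromBlocks 1 X 0 1
      = fromBlocks ((μ - 1) • 1) (-X) 0 ((μ - 1) • 1) := by
    rw [Algebra.algebraMap_eq_smul_one, ← Matrix.fromBlocks_one, Matrix.fromBlocks_smul]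
    ext i j
    rcases i with i | i <;> rcases j with j | j <;>
      simp [Matrix.fromBlocks, sub_smul]
  rw [h1, Matrix.isUnit_iff_isUnit_det, Matrix.det_fromBlocks_zero₂₁, Matrix.det_smul,
    Matrix.det_smul, Matrix.det_one, Matrix.det_one, mul_one, mul_one, Fintype.card_fin, Fintype.card_fin, ← pow_add,
    isUnit_iff_ne_zero, not_ne_iff, pow_eq_zero_iff hnm.ne', sub_eq_zero]

/-- The spectrum (over `ℂ`) of the preconditioned saddle-point matrix
`𝒫⁻¹ 𝒜` equals `{1}`. -/
theorem preconditioned_saddle_point_spectrum (n m : ℕ) (hnm : 0 < n + m)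
    (A : Matrix (Fin n) (Fin n) ℝ) (hA : IsUnit A)
    (B₁ B₂ : Matrix (Fin m) (Fin n) ℝ) (C : Matrix (Fin m) (Fin m) ℝ)
    (S : Matrix (Fin m) (Fin m) ℝ) (hS : S = C + B₂ * A⁻¹ * B₁ᵀ)
    (hSunit : IsUnit S) :
    spectrum ℂ
      (((fromBlocks A 0 B₂ (-S))⁻¹ * fromBlocks A B₁ᵀ B₂ (-C)).map
        (algebraMap ℝ ℂ)) = {1} := by
  have hAdet : IsUnit A.det := (Matrix.isUnit_iff_isUnit_det A).mp hA
  have hPdet : IsUnit (fromBlocks A 0 B₂ (-S)).det := by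
    rw [Matrix.det_fromBlocks_zero₁₂]
    exact hAdet.mul ((Matrix.isUnit_iff_isUnit_det _).mp hSunit.neg)
  have hfact : fromBlocks A 0 B₂ (-S) * fromBlocks 1 (A⁻¹ * B₁ᵀ) 0 1
      = fromBlocks A B₁ᵀ B₂ (-C) := by
    have h2 : A * (A⁻¹ * B₁ᵀ) = B₁ᵀ := by
      rw [← Matrix.mul_assoc, Matrix.mul_nonsing_inv A hAdet, Matrix.one_mul]
    have h3 : B₂ * (A⁻¹ * B₁ᵀ) + -S = -C := by
      rw [hS, Matrix.mul_assoc]; abel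
    simp only [Matrix.fromBlocks_multiply, Matrix.mul_one, Matrix.one_mul,
      Matrix.zero_mul, Matrix.mul_zero, add_zero, zero_add, h2, h3]
  have key : (fromBlocks A 0 B₂ (-S))⁻¹ * fromBlocks A B₁ᵀ B₂ (-C)
      = fromBlocks 1 (A⁻¹ * B₁ᵀ) 0 1 := by
    rw [← hfact, ← Matrix.mul_assoc, Matrix.nonsing_inv_mul _ hPdet, Matrix.one_mul]
  rw [key, Matrix.fromBlocks_map]
  simp only [Matrix.map_zero _ (map_zero _), Matrix.map_one _ (map_zero _) (map_one _)]
  exact spec_aux n m hnm _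
end

section
/- Let A be a symmetric positive definite n×n real matrix, C a symmetric positive definite n×n real matrix, B an n×n real matrix, and Λ an n×n real matrix satisfying Λ A⁻¹ Λᵀ = C. Define S = C + B A⁻¹ Bᵀ and Ŝ = (B + Λ) A⁻¹ (B + Λ)ᵀ. Then the matrix S − (1/2) Ŝ is symmetric positive semidefinite; equivalently, xᵀ S x ≥ (1/2) xᵀ Ŝ x for every x ∈ ℝⁿ. -/
/-! Substituting the matching condition `C = Λ A⁻¹ Λᵀ`, the parallelogram law for the
form `(X, Y) ↦ X A⁻¹ Yᵀ` gives `S - ½ Ŝ = ½ (B - Λ) A⁻¹ (B - Λ)ᵀ`, which is positive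
semidefinite because `A⁻¹` is. -/

open Matrix

namespace Matrix

variable {m n R : Type*} [Fintype n]

theorem mul_mul_transpose_add_add_mul_mul_transpose_sub [Ring R] (B L : Matrix m n R)
    (M : Matrix n n R) :
    (B + L) * M * (B + L)ᵀ + (B - L) * M * (B - L)ᵀ = 2 • (B * M * Bᵀ + L * M * Lᵀ) := by
  simp only [transpose_add, transpose_sub, Matrix.add_mul, Matrix.mul_add, Matrix.sub_mul,
    Matrix.mul_sub, two_smul]
  abel

theorem add_sub_half_smul_mul_mul_transpose_add [Field R] [NeZero (2 : R)]
    (B L : Matrix m n R) (M : Matrix n n R) :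
    L * M * Lᵀ + B * M * Bᵀ - (1 / 2 : R) • ((B + L) * M * (B + L)ᵀ) =
      (1 / 2 : R) • ((B - L) * M * (B - L)ᵀ) := by
  have h := mul_mul_transpose_add_add_mul_mul_transpose_sub B L M
  rw [← eq_sub_iff_add_eq'] at h
  rw [h, smul_sub, smul_comm, ← smul_assoc, nsmul_eq_mul, Nat.cast_ofNat,
    mul_one_div_cancel two_ne_zero, one_smul, add_comm]

theorem PosSemidef.smul_dotProduct_mulVec_le [CommRing R] [PartialOrder R] [StarRing R]
    [TrivialStar R] [IsOrderedAddMonoid R] {S T : Matrix n n R} {c : R}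
    (h : (S - c • T).PosSemidef) (x : n → R) :
    c * (x ⬝ᵥ T *ᵥ x) ≤ x ⬝ᵥ S *ᵥ x := by
  have := h.dotProduct_mulVec_nonneg x
  rwa [star_trivial, sub_mulVec, smul_mulVec, dotProduct_sub, dotProduct_smul, smul_eq_mul,
    sub_nonneg] at this

end Matrix

theorem matching_strategy_half_lower_bound_general (n : ℕ)
    (A C B Lam : Matrix (Fin n) (Fin n) ℝ)
    (hA : A.PosDef)
    (hLam : Lam * A⁻¹ * Lamᵀ = C)
    (S Shat : Matrix (Fin n) (Fin n) ℝ)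
    (hS : S = C + B * A⁻¹ * Bᵀ)
    (hShat : Shat = (B + Lam) * A⁻¹ * (B + Lam)ᵀ) :
    (S - (1 / 2 : ℝ) • Shat).PosSemidef ∧
      ∀ x : Fin n → ℝ,
        (1 / 2 : ℝ) * (x ⬝ᵥ Shat.mulVec x) ≤ x ⬝ᵥ S.mulVec x := by
  have hpsd : (S - (1 / 2 : ℝ) • Shat).PosSemidef := by
    rw [hS, hShat, ← hLam, add_sub_half_smul_mul_mul_transpose_add]
    simpa using (hA.inv.posSemidef.mul_mul_conjTranspose_same (B - Lam)).smul
      (by norm_num : (0 : ℝ) ≤ 1 / 2)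
  exact ⟨hpsd, hpsd.smul_dotProduct_mulVec_le⟩

/-- Matching strategy lower bound: if `Lam A⁻¹ Lamᵀ = C`, then with
`S = C + B A⁻¹ Bᵀ` and `Shat = (B + Lam) A⁻¹ (B + Lam)ᵀ`, the matrix
`S - (1/2) Shat` is symmetric positive semidefinite; equivalently
`xᵀ S x ≥ (1/2) xᵀ Shat x` for all `x`. -/
theorem matching_strategy_half_lower_bound (n : ℕ)
    (A C B Lam : Matrix (Fin n) (Fin n) ℝ)
    (hA : A.PosDef) (hC : C.PosDef)
    (hLam : Lam * A⁻¹ * Lamᵀ = C)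
    (S Shat : Matrix (Fin n) (Fin n) ℝ)
    (hS : S = C + B * A⁻¹ * Bᵀ)
    (hShat : Shat = (B + Lam) * A⁻¹ * (B + Lam)ᵀ) :
    (S - (1 / 2 : ℝ) • Shat).PosSemidef ∧
      ∀ x : Fin n → ℝ,
        (1 / 2 : ℝ) * (x ⬝ᵥ Shat.mulVec x) ≤ x ⬝ᵥ S.mulVec x :=
  matching_strategy_half_lower_bound_general n A C B Lam hA hLam S Shat hS hShat
end

section
/- Let A be a symmetric positive definite n×n real matrix, C a symmetric positive definite n×n real matrix, B an n×n real matrix, and Λ an n×n real matrix satisfying Λ A⁻¹ Λᵀ = C. Define S = C + B A⁻¹ Bᵀ and Ŝ = (B + Λ) A⁻¹ (B + Λ)ᵀ, and assume Ŝ is invertible. Then every eigenvalue of Ŝ⁻¹ S (over ℂ) is real and is greater than or equal to 1/2. -/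
/-!
Adding the congruences `(B ± Λ) A⁻¹ (B ± Λ)ᵀ` gives the parallelogram law
`2 S = Ŝ + (B - Λ) A⁻¹ (B - Λ)ᵀ`, so `S - ½ Ŝ` is positive semidefinite, while `Ŝ`, a positive
semidefinite unit, is positive definite. If `Ŝ⁻¹ S v = z v` with `v ≠ 0`, then
`v⋆ (S - ½ Ŝ) v = (z - ½) · v⋆ Ŝ v` with `v⋆ Ŝ v > 0`, so `z - ½` is a nonnegative real.
-/

open Matrix ComplexOrder

variable {m n : Type*} [Fintype n]

theorem Matrix.exists_mulVec_eq_smul_of_mem_spectrum [DecidableEq n] {K : Type*} [Field K]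
    {M : Matrix n n K} {z : K} (hz : z ∈ spectrum K M) : ∃ v ≠ 0, M *ᵥ v = z • v := by
  rw [← Matrix.spectrum_toLin', ← Module.End.hasEigenvalue_iff_mem_spectrum] at hz
  obtain ⟨v, hv⟩ := hz.exists_hasEigenvector
  exact ⟨v, hv.2, by simpa using hv.apply_eq_smul⟩

theorem Matrix.parallelogram_law_mul_mul_transpose {R : Type*} [Ring R] (X Y : Matrix m n R)
    (M : Matrix n n R) :
    (X + Y) * M * (X + Y)ᵀ + (X - Y) * M * (X - Y)ᵀ = 2 • (X * M * Xᵀ + Y * M * Yᵀ) := by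
  simp only [transpose_add, transpose_sub, Matrix.add_mul, Matrix.mul_add, Matrix.sub_mul,
    Matrix.mul_sub, two_smul]
  abel

variable {𝕜 : Type*} [RCLike 𝕜]

theorem Matrix.PosDef.le_of_mem_spectrum_of_mul_eq [DecidableEq n] {P Q M : Matrix n n 𝕜}
    {c z : 𝕜} (hP : P.PosDef) (hQ : (Q - c • P).PosSemidef) (hM : P * M = Q)
    (hz : z ∈ spectrum 𝕜 M) : c ≤ z := by
  obtain ⟨v, hv0, hv⟩ := exists_mulVec_eq_smul_of_mem_spectrum hz
  have hQv : Q *ᵥ v = z • P *ᵥ v := by rw [← hM, ← mulVec_mulVec, hv, mulVec_smul]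
  have hquad : star v ⬝ᵥ (Q - c • P) *ᵥ v = (z - c) * (star v ⬝ᵥ P *ᵥ v) := by
    rw [sub_mulVec, hQv, smul_mulVec, ← sub_smul, dotProduct_smul, smul_eq_mul]
  have hpos := hP.dotProduct_mulVec_pos hv0
  have hgap : z - c = (star v ⬝ᵥ (Q - c • P) *ᵥ v) / (star v ⬝ᵥ P *ᵥ v) :=
    eq_div_of_mul_eq hpos.ne' hquad.symm
  exact sub_nonneg.mp (hgap ▸ div_nonneg (hQ.dotProduct_mulVec_nonneg v) hpos.le)

open scoped MatrixOrder in
theorem Matrix.PosSemidef.map_algebraMap {M : Matrix n n ℝ} (hM : M.PosSemidef) :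
    (M.map (algebraMap ℝ 𝕜)).PosSemidef := by
  classical
  obtain ⟨R, rfl⟩ := CStarAlgebra.nonneg_iff_eq_star_mul_self.mp hM.nonneg
  rw [star_eq_conjTranspose, Matrix.map_mul, conjTranspose_map _ (fun a => by simp)]
  exact posSemidef_conjTranspose_mul_self _

theorem Matrix.PosDef.map_algebraMap [DecidableEq n] {M : Matrix n n ℝ} (hM : M.PosDef) :
    (M.map (algebraMap ℝ 𝕜)).PosDef :=
  hM.posSemidef.map_algebraMap.posDef_iff_isUnit.mpr <|
    hM.isUnit.map (algebraMap ℝ 𝕜).mapMatrix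

theorem Matrix.PosDef.le_of_mem_spectrum_map_inv_mul [DecidableEq n] {P Q : Matrix n n ℝ} {c : ℝ}
    {z : 𝕜} (hP : P.PosDef) (hQ : (Q - c • P).PosSemidef)
    (hz : z ∈ spectrum 𝕜 ((P⁻¹ * Q).map (algebraMap ℝ 𝕜))) : (c : 𝕜) ≤ z := by
  refine hP.map_algebraMap.le_of_mem_spectrum_of_mul_eq (Q := Q.map (algebraMap ℝ 𝕜)) ?_ ?_ hz
  · simpa [Matrix.map_sub, Matrix.map_smul] using hQ.map_algebraMap (𝕜 := 𝕜)
  · rw [← Matrix.map_mul, ← mul_assoc, mul_nonsing_inv _ (P.isUnit_iff_isUnit_det.mp hP.isUnit),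
      one_mul]

theorem matching_strategy_eigenvalue_lower_bound_general (n : ℕ)
    (A C B Lam : Matrix (Fin n) (Fin n) ℝ)
    (hA : A.PosDef)
    (hLam : Lam * A⁻¹ * Lamᵀ = C)
    (S Shat : Matrix (Fin n) (Fin n) ℝ)
    (hS : S = C + B * A⁻¹ * Bᵀ)
    (hShat : Shat = (B + Lam) * A⁻¹ * (B + Lam)ᵀ)
    (hShatUnit : IsUnit Shat) :
    ∀ z ∈ spectrum ℂ ((Shat⁻¹ * S).map (algebraMap ℝ ℂ)),
      z.im = 0 ∧ (1 / 2 : ℝ) ≤ z.re := by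
  have hcongr (X : Matrix (Fin n) (Fin n) ℝ) : (X * A⁻¹ * Xᵀ).PosSemidef := by
    simpa using hA.inv.posSemidef.mul_mul_conjTranspose_same X
  have hShatPD : Shat.PosDef := (hShat ▸ hcongr (B + Lam)).posDef_iff_isUnit.mpr hShatUnit
  have hgap : S - (1 / 2 : ℝ) • Shat = (1 / 2 : ℝ) • ((B - Lam) * A⁻¹ * (B - Lam)ᵀ) := by
    subst hS hShat hLam
    linear_combination (norm := module)
      (1 / 2 : ℝ) • (parallelogram_law_mul_mul_transpose B Lam A⁻¹).symm
  intro z hz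
  have hz_ge := hShatPD.le_of_mem_spectrum_map_inv_mul (hgap ▸ (hcongr _).smul (by norm_num)) hz
  simpa [Complex.le_def, eq_comm, and_comm] using hz_ge

/-- Matching strategy spectral lower bound: if `Lam A⁻¹ Lamᵀ = C`,
`S = C + B A⁻¹ Bᵀ`, `Shat = (B + Lam) A⁻¹ (B + Lam)ᵀ` and `Shat` is
invertible, then every eigenvalue of `Shat⁻¹ S` (over `ℂ`) is real and is
at least `1/2`. -/
theorem matching_strategy_eigenvalue_lower_bound (n : ℕ)
    (A C B Lam : Matrix (Fin n) (Fin n) ℝ)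
    (hA : A.PosDef) (hC : C.PosDef)
    (hLam : Lam * A⁻¹ * Lamᵀ = C)
    (S Shat : Matrix (Fin n) (Fin n) ℝ)
    (hS : S = C + B * A⁻¹ * Bᵀ)
    (hShat : Shat = (B + Lam) * A⁻¹ * (B + Lam)ᵀ)
    (hShatUnit : IsUnit Shat) :
    ∀ z ∈ spectrum ℂ ((Shat⁻¹ * S).map (algebraMap ℝ ℂ)),
      z.im = 0 ∧ (1 / 2 : ℝ) ≤ z.re :=
  matching_strategy_eigenvalue_lower_bound_general n A C B Lam hA hLam S Shat hS hShat hShatUnit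
end

section
/- Let A be a symmetric positive definite n×n real matrix, C a symmetric positive definite n×n real matrix, B an n×n real matrix, and Λ an n×n real matrix satisfying Λ A⁻¹ Λᵀ = C. Define S = C + B A⁻¹ Bᵀ and Ŝ = (B + Λ) A⁻¹ (B + Λ)ᵀ, and assume that the mixed term Λ A⁻¹ Bᵀ + B A⁻¹ Λᵀ is positive semidefinite and that Ŝ is invertible. Then Ŝ − S is positive semidefinite, and every eigenvalue of Ŝ⁻¹ S (over ℂ) is real and lies in the interval [1/2, 1]. -/
/-!
In the Loewner order `Ŝ - S` is the mixed term and `2S - Ŝ = (Λ - B) A⁻¹ (Λ - B)ᵀ`, so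
`Ŝ / 2 ≤ S ≤ Ŝ`. Being an invertible Gram matrix, `Ŝ` is positive definite. If `S v = z Ŝ v`
with `v ≠ 0`, then `v* S v = z (v* Ŝ v)` with `v* Ŝ v > 0`, and the two inequalities, read at
`v`, force `z` to be real and to lie in `[1/2, 1]`.
-/

open Matrix
open scoped ComplexOrder MatrixOrder

namespace Matrix
variable {ι : Type*} [Fintype ι]

theorem PosSemidef.map_ofReal {M : Matrix ι ι ℝ} (hM : M.PosSemidef) :
    (M.map (algebraMap ℝ ℂ)).PosSemidef := by
  classical
  obtain ⟨R, rfl⟩ := CStarAlgebra.nonneg_iff_eq_star_mul_self.mp hM.nonneg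
  rw [star_eq_conjTranspose, Matrix.map_mul, conjTranspose_map _ (fun _ ↦ by simp)]
  exact posSemidef_conjTranspose_mul_self _

theorem PosDef.map_ofReal [DecidableEq ι] {M : Matrix ι ι ℝ} (hM : M.PosDef) :
    (M.map (algebraMap ℝ ℂ)).PosDef :=
  hM.posSemidef.map_ofReal.posDef_iff_isUnit.mpr (hM.isUnit.map (algebraMap ℝ ℂ).mapMatrix)

theorem exists_mulVec_eq_smul_mulVec_of_mem_spectrum {K : Type*} [Field K] [DecidableEq ι]
    {M P Q : Matrix ι ι K} (hPM : P * M = Q) {z : K} (hz : z ∈ spectrum K M) :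
    ∃ v ≠ 0, Q *ᵥ v = z • P *ᵥ v := by
  rw [← spectrum_toLin', ← Module.End.hasEigenvalue_iff_mem_spectrum] at hz
  obtain ⟨hv, hv0⟩ := hz.exists_hasEigenvector.choose_spec
  refine ⟨_, hv0, ?_⟩
  rw [Module.End.mem_eigenspace_iff, toLin'_apply] at hv
  rw [← hPM, ← mulVec_mulVec, hv, mulVec_smul]

theorem mem_Icc_of_mulVec_eq_smul_mulVec {P Q : Matrix ι ι ℂ} (hP : P.PosDef) {a b : ℝ}
    (hlo : (Q - a • P).PosSemidef) (hhi : (b • P - Q).PosSemidef)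
    {v : ι → ℂ} (hv : v ≠ 0) {z : ℂ} (hz : Q *ᵥ v = z • P *ᵥ v) :
    z ∈ Set.Icc (a : ℂ) b := by
  have hp : 0 < star v ⬝ᵥ P *ᵥ v := hP.dotProduct_mulVec_pos hv
  have hQ : star v ⬝ᵥ Q *ᵥ v = z * (star v ⬝ᵥ P *ᵥ v) := by
    rw [hz, dotProduct_smul, smul_eq_mul]
  have hlo' := hlo.dotProduct_mulVec_nonneg v
  have hhi' := hhi.dotProduct_mulVec_nonneg v
  simp only [sub_mulVec, dotProduct_sub, smul_mulVec, dotProduct_smul, hQ, Complex.real_smul,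
    sub_nonneg] at hlo' hhi'
  exact ⟨le_of_mul_le_mul_right hlo' hp, le_of_mul_le_mul_right hhi' hp⟩

theorem spectrum_map_inv_mul_subset_Icc [DecidableEq ι] {P Q : Matrix ι ι ℝ} (hP : P.PosDef)
    {a b : ℝ} (hlo : (Q - a • P).PosSemidef) (hhi : (b • P - Q).PosSemidef) :
    spectrum ℂ ((P⁻¹ * Q).map (algebraMap ℝ ℂ)) ⊆ Set.Icc (a : ℂ) b := by
  intro z hz
  have hPM :
      P.map (algebraMap ℝ ℂ) * (P⁻¹ * Q).map (algebraMap ℝ ℂ) = Q.map (algebraMap ℝ ℂ) := by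
    rw [← Matrix.map_mul, mul_nonsing_inv_cancel_left _ _ ((isUnit_iff_isUnit_det P).mp hP.isUnit)]
  obtain ⟨v, hv, hvz⟩ := exists_mulVec_eq_smul_mulVec_of_mem_spectrum hPM hz
  refine mem_Icc_of_mulVec_eq_smul_mulVec hP.map_ofReal ?_ ?_ hv hvz
  · convert hlo.map_ofReal using 1
    ext i j; simp
  · convert hhi.map_ofReal using 1
    ext i j; simp

end Matrix

theorem matching_strategy_eigenvalue_bounds_general (n : ℕ)
    (A C B Lam : Matrix (Fin n) (Fin n) ℝ)
    (hA : A.PosDef)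
    (hLam : Lam * A⁻¹ * Lamᵀ = C)
    (S Shat : Matrix (Fin n) (Fin n) ℝ)
    (hS : S = C + B * A⁻¹ * Bᵀ)
    (hShat : Shat = (B + Lam) * A⁻¹ * (B + Lam)ᵀ)
    (hmixed : (Lam * A⁻¹ * Bᵀ + B * A⁻¹ * Lamᵀ).PosSemidef)
    (hShatUnit : IsUnit Shat) :
    (Shat - S).PosSemidef ∧
      ∀ z ∈ spectrum ℂ ((Shat⁻¹ * S).map (algebraMap ℝ ℂ)),
        z.im = 0 ∧ (1 / 2 : ℝ) ≤ z.re ∧ z.re ≤ 1 := by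
  have hAinv : A⁻¹.PosSemidef := hA.inv.posSemidef
  have hupper : (Shat - S).PosSemidef := by
    convert hmixed using 1
    rw [hS, hShat, ← hLam, transpose_add]
    noncomm_ring
  have hlower : (S - (1 / 2 : ℝ) • Shat).PosSemidef := by
    have hGram : S + S - Shat = (Lam - B) * A⁻¹ * (Lam - B)ᴴ := by
      rw [hS, hShat, ← hLam, conjTranspose_eq_transpose_of_trivial, transpose_add, transpose_sub]
      noncomm_ring
    rw [show S - (1 / 2 : ℝ) • Shat = (1 / 2 : ℝ) • (S + S - Shat) by module, hGram]
    exact (hAinv.mul_mul_conjTranspose_same _).smul (by norm_num)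
  have hShatPos : Shat.PosDef := by
    have hGram := hAinv.mul_mul_conjTranspose_same (B + Lam)
    rw [conjTranspose_eq_transpose_of_trivial, ← hShat] at hGram
    exact hGram.posDef_iff_isUnit.mpr hShatUnit
  refine ⟨hupper, fun z hz ↦ ?_⟩
  obtain ⟨hlo, hhi⟩ :=
    spectrum_map_inv_mul_subset_Icc (b := 1) hShatPos hlower (by rwa [one_smul]) hz
  rw [Complex.le_def, Complex.ofReal_re, Complex.ofReal_im] at hlo hhi
  exact ⟨hlo.2.symm, hlo.1, hhi.1⟩

/-- Matching strategy two-sided spectral bound: if `Lam A⁻¹ Lamᵀ = C`,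
`S = C + B A⁻¹ Bᵀ`, `Shat = (B + Lam) A⁻¹ (B + Lam)ᵀ`, the mixed term
`Lam A⁻¹ Bᵀ + B A⁻¹ Lamᵀ` is positive semidefinite and `Shat` is
invertible, then `Shat - S` is positive semidefinite and every eigenvalue
of `Shat⁻¹ S` (over `ℂ`) is real and lies in `[1/2, 1]`. -/
theorem matching_strategy_eigenvalue_bounds (n : ℕ)
    (A C B Lam : Matrix (Fin n) (Fin n) ℝ)
    (hA : A.PosDef) (hC : C.PosDef)
    (hLam : Lam * A⁻¹ * Lamᵀ = C)
    (S Shat : Matrix (Fin n) (Fin n) ℝ)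
    (hS : S = C + B * A⁻¹ * Bᵀ)
    (hShat : Shat = (B + Lam) * A⁻¹ * (B + Lam)ᵀ)
    (hmixed : (Lam * A⁻¹ * Bᵀ + B * A⁻¹ * Lamᵀ).PosSemidef)
    (hShatUnit : IsUnit Shat) :
    (Shat - S).PosSemidef ∧
      ∀ z ∈ spectrum ℂ ((Shat⁻¹ * S).map (algebraMap ℝ ℂ)),
        z.im = 0 ∧ (1 / 2 : ℝ) ≤ z.re ∧ z.re ≤ 1 :=
  matching_strategy_eigenvalue_bounds_general n A C B Lam hA hLam S Shat hS hShat hmixed hShatUnit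
end
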